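/- arXiv:1202.0910 — 5 statements merged into one kernel-verified Lean document; each statement's English description precedes it below -/
import Mathlib

section
/- Let T > 0, μ > 0, Fr > 0 and r = 1/(μ Fr²). Let h : [0,T] × [0,1] → ℝ be a smooth function with h(t,x) > 0 everywhere satisfying the heat equation ∂ₜh = μ ∂ₓₓh on (0,T) × (0,1), and define u := −μ ∂ₓh/h. Then (h,u) satisfies the momentum equation ∂ₜ(h u) + ∂ₓ(h u²) − ∂ₓ(μ h ∂ₓu) + (1/Fr²) ∂ₓh + r h u = 0 on (0,T) × (0,1); in particular (h, −μ ∂ₓ ln h) is a particular (quasi-)solution of the viscous shallow water system with friction. -/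
open Real Set

lemma contDiffAt_deriv' {g : ℝ → ℝ} {y : ℝ} {m n : WithTop ℕ∞}
    (hg : ContDiffAt ℝ n g y) (hmn : m + 1 ≤ n) : ContDiffAt ℝ m (deriv g) y := by
  have h' := hg.fderiv_right hmn
  have : deriv g = fun z => fderiv ℝ g z 1 := by
    ext z; exact (fderiv_apply_one_eq_deriv).symm
  rw [this]
  exact h'.clm_apply contDiffAt_const

/-- If a positive smooth `h` solves the heat equation `∂ₜh = μ ∂ₓₓh` on
`(0,T) × (0,1)` and `u := -μ ∂ₓh / h`, then `(h,u)` satisfies the momentum equation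
`∂ₜ(h u) + ∂ₓ(h u²) − ∂ₓ(μ h ∂ₓu) + (1/Fr²) ∂ₓh + r h u = 0` with `r = 1/(μ Fr²)`;
i.e. `(h, -μ ∂ₓ ln h)` is a quasi-solution of the viscous shallow water system. -/
theorem quasiSolution_momentum
    (T μ Fr r : ℝ) (hT : 0 < T) (hμ : 0 < μ) (hFr : 0 < Fr) (hr : r = 1 / (μ * Fr ^ 2))
    (h : ℝ → ℝ → ℝ)
    (hsmooth : ContDiffOn ℝ (⊤ : ℕ∞) (fun p : ℝ × ℝ => h p.1 p.2) (Icc 0 T ×ˢ Icc 0 1))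
    (hpos : ∀ t ∈ Icc (0:ℝ) T, ∀ x ∈ Icc (0:ℝ) 1, 0 < h t x)
    (hheat : ∀ t ∈ Ioo (0:ℝ) T, ∀ x ∈ Ioo (0:ℝ) 1,
        deriv (fun s => h s x) t = μ * deriv (deriv (h t)) x)
    (u : ℝ → ℝ → ℝ)
    (hu : ∀ t x, u t x = -μ * deriv (h t) x / h t x) :
    ∀ t ∈ Ioo (0:ℝ) T, ∀ x ∈ Ioo (0:ℝ) 1,
      deriv (fun s => h s x * u s x) t
        + deriv (fun y => h t y * u t y ^ 2) x
        - deriv (fun y => μ * h t y * deriv (u t) y) x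
        + (1 / Fr ^ 2) * deriv (h t) x
        + r * h t x * u t x = 0 := by
  intro t ht x hx
  set F : ℝ × ℝ → ℝ := fun p => h p.1 p.2 with hF
  -- smoothness of F at interior points
  have hFat : ∀ s ∈ Ioo (0:ℝ) T, ∀ y ∈ Ioo (0:ℝ) 1, ContDiffAt ℝ (⊤ : ℕ∞) F (s, y) := by
    intro s hs y hy
    exact hsmooth.contDiffAt (prod_mem_nhds (Icc_mem_nhds hs.1 hs.2) (Icc_mem_nhds hy.1 hy.2))
  set Φ : ℝ × ℝ → ℝ × ℝ →L[ℝ] ℝ := fderiv ℝ F with hΦ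
  -- spatial slice derivative
  have slice_x : ∀ s ∈ Ioo (0:ℝ) T, ∀ y ∈ Ioo (0:ℝ) 1,
      HasDerivAt (h s) (Φ (s, y) (0, 1)) y := by
    intro s hs y hy
    have hd : HasFDerivAt F (Φ (s, y)) (s, y) :=
      ((hFat s hs y hy).differentiableAt (by simp)).hasFDerivAt
    have hc : HasDerivAt (fun z : ℝ => ((s, z) : ℝ × ℝ)) ((0 : ℝ), (1 : ℝ)) y :=
      (hasDerivAt_const y s).prodMk (hasDerivAt_id y)
    exact hd.comp_hasDerivAt y hc
  -- temporal slice derivative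
  have slice_t : ∀ s ∈ Ioo (0:ℝ) T, ∀ y ∈ Ioo (0:ℝ) 1,
      HasDerivAt (fun σ => h σ y) (Φ (s, y) (1, 0)) s := by
    intro s hs y hy
    have hd : HasFDerivAt F (Φ (s, y)) (s, y) :=
      ((hFat s hs y hy).differentiableAt (by simp)).hasFDerivAt
    have hc : HasDerivAt (fun σ : ℝ => ((σ, y) : ℝ × ℝ)) ((1 : ℝ), (0 : ℝ)) s :=
      (hasDerivAt_id s).prodMk (hasDerivAt_const s y)
    exact hd.comp_hasDerivAt s hc
  -- second derivative
  have hΦdiff : HasFDerivAt Φ (fderiv ℝ Φ (t, x)) (t, x) := by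
    have : ContDiffAt ℝ 1 Φ (t, x) := (hFat t ht x hx).fderiv_right (WithTop.coe_le_coe.mpr le_top)
    exact (this.differentiableAt (by simp)).hasFDerivAt
  set B := fderiv ℝ Φ (t, x) with hB
  have hsymm : B (1, 0) (0, 1) = B (0, 1) (1, 0) :=
    (hFat t ht x hx).isSymmSndFDerivAt
      (by rw [minSmoothness_of_isRCLikeNormedField]; exact WithTop.coe_le_coe.mpr le_top) _ _
  -- derivative of s ↦ Φ (s,x) (0,1)
  have hDt : HasDerivAt (fun s => Φ (s, x) (0, 1)) (B (1, 0) (0, 1)) t := by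
    have hc : HasDerivAt (fun σ : ℝ => ((σ, x) : ℝ × ℝ)) ((1 : ℝ), (0 : ℝ)) t :=
      (hasDerivAt_id t).prodMk (hasDerivAt_const t x)
    have hψ : HasFDerivAt (fun p : ℝ × ℝ => Φ p ((0 : ℝ), (1 : ℝ)))
        ((ContinuousLinearMap.apply ℝ ℝ ((0 : ℝ), (1 : ℝ))).comp B) (t, x) :=
      (ContinuousLinearMap.apply ℝ ℝ ((0 : ℝ), (1 : ℝ))).hasFDerivAt.comp (t, x) hΦdiff
    exact hψ.comp_hasDerivAt t hc
  -- derivative of y ↦ Φ (t,y) (1,0)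
  have hDx : HasDerivAt (fun y => Φ (t, y) (1, 0)) (B (0, 1) (1, 0)) x := by
    have hc : HasDerivAt (fun z : ℝ => ((t, z) : ℝ × ℝ)) ((0 : ℝ), (1 : ℝ)) x :=
      (hasDerivAt_const x t).prodMk (hasDerivAt_id x)
    have hψ : HasFDerivAt (fun p : ℝ × ℝ => Φ p ((1 : ℝ), (0 : ℝ)))
        ((ContinuousLinearMap.apply ℝ ℝ ((1 : ℝ), (0 : ℝ))).comp B) (t, x) :=
      (ContinuousLinearMap.apply ℝ ℝ ((1 : ℝ), (0 : ℝ))).hasFDerivAt.comp (t, x) hΦdiff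
    exact hψ.comp_hasDerivAt x hc
  -- smoothness of the spatial slice
  have hne_x : h t x ≠ 0 := (hpos t (Ioo_subset_Icc_self ht) x (Ioo_subset_Icc_self hx)).ne'
  have hgCD : ∀ y ∈ Ioo (0:ℝ) 1, ContDiffAt ℝ (⊤ : ℕ∞) (h t) y := by
    intro y hy
    have : ContDiffAt ℝ (⊤ : ℕ∞) (F ∘ fun z : ℝ => ((t, z) : ℝ × ℝ)) y :=
      (hFat t ht y hy).comp y (contDiffAt_const.prodMk contDiffAt_id)
    exact this
  have d_g : ∀ y ∈ Ioo (0:ℝ) 1, DifferentiableAt ℝ (h t) y :=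
    fun y hy => (hgCD y hy).differentiableAt (by simp)
  have hg1CD : ∀ y ∈ Ioo (0:ℝ) 1, ContDiffAt ℝ 2 (deriv (h t)) y :=
    fun y hy => contDiffAt_deriv' (hgCD y hy) (WithTop.coe_le_coe.mpr le_top)
  have d_g1 : ∀ y ∈ Ioo (0:ℝ) 1, DifferentiableAt ℝ (deriv (h t)) y :=
    fun y hy => (hg1CD y hy).differentiableAt (by simp)
  have d_g2 : ∀ y ∈ Ioo (0:ℝ) 1, DifferentiableAt ℝ (deriv (deriv (h t))) y := by
    intro y hy
    have : ContDiffAt ℝ 1 (deriv (deriv (h t))) y :=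
      contDiffAt_deriv' (hg1CD y hy) (by norm_num)
    exact this.differentiableAt (by simp)
  -- TERM 1
  have E1 : (fun s => h s x * u s x) =ᶠ[nhds t] (fun s => -μ * deriv (h s) x) := by
    filter_upwards [Ioo_mem_nhds ht.1 ht.2] with s hs
    have hne : h s x ≠ 0 := (hpos s (Ioo_subset_Icc_self hs) x (Ioo_subset_Icc_self hx)).ne'
    rw [hu s x, mul_comm, div_mul_cancel₀ _ hne]
  have E2 : (fun s => deriv (h s) x) =ᶠ[nhds t] (fun s => Φ (s, x) (0, 1)) := by
    filter_upwards [Ioo_mem_nhds ht.1 ht.2] with s hs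
    exact (slice_x s hs x hx).deriv
  have hD1 : HasDerivAt (fun s => -μ * deriv (h s) x) (-μ * B (1, 0) (0, 1)) t :=
    (hDt.congr_of_eventuallyEq E2).const_mul (-μ)
  have T1 : deriv (fun s => h s x * u s x) t = -μ * B (1, 0) (0, 1) := by
    rw [E1.deriv_eq]; exact hD1.deriv
  -- identify B (0,1) (1,0) via the heat equation
  have E3 : (fun y => Φ (t, y) (1, 0)) =ᶠ[nhds x] (fun y => μ * deriv (deriv (h t)) y) := by
    filter_upwards [Ioo_mem_nhds hx.1 hx.2] with y hy
    rw [← (slice_t t ht y hy).deriv]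
    exact hheat t ht y hy
  have hBx : B (0, 1) (1, 0) = μ * deriv (deriv (deriv (h t))) x := by
    rw [← hDx.deriv, E3.deriv_eq, deriv_const_mul _ (d_g2 x hx)]
  -- TERM 2
  set A : ℝ → ℝ := fun y => μ ^ 2 * (deriv (h t) y) ^ 2 / h t y with hA
  have E4 : (fun y => h t y * u t y ^ 2) =ᶠ[nhds x] A := by
    filter_upwards [Ioo_mem_nhds hx.1 hx.2] with y hy
    have hne : h t y ≠ 0 := (hpos t (Ioo_subset_Icc_self ht) y (Ioo_subset_Icc_self hy)).ne'
    rw [hu t y, hA]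
    field_simp
  have dA : DifferentiableAt ℝ A x :=
    (((d_g1 x hx).pow 2).const_mul (μ ^ 2)).div (d_g x hx) hne_x
  have T2 : deriv (fun y => h t y * u t y ^ 2) x = deriv A x := E4.deriv_eq
  -- TERM 3
  have E5 : (fun y => μ * h t y * deriv (u t) y)
      =ᶠ[nhds x] (fun y => A y - μ ^ 2 * deriv (deriv (h t)) y) := by
    filter_upwards [Ioo_mem_nhds hx.1 hx.2] with y hy
    have hne : h t y ≠ 0 := (hpos t (Ioo_subset_Icc_self ht) y (Ioo_subset_Icc_self hy)).ne'
    have hud : u t = fun z => -μ * deriv (h t) z / h t z := funext (hu t)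
    have hder : HasDerivAt (u t)
        ((-μ * deriv (deriv (h t)) y * h t y - -μ * deriv (h t) y * deriv (h t) y) /
          h t y ^ 2) y := by
      rw [hud]
      exact (((d_g1 y hy).hasDerivAt).const_mul (-μ)).div ((d_g y hy).hasDerivAt) hne
    rw [hder.deriv, hA]
    field_simp
    ring
  have T3 : deriv (fun y => μ * h t y * deriv (u t) y) x
      = deriv A x - μ ^ 2 * deriv (deriv (deriv (h t))) x := by
    rw [E5.deriv_eq, deriv_fun_sub dA ((d_g2 x hx).const_mul (μ ^ 2)),
      deriv_const_mul _ (d_g2 x hx)]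
  -- TERM 5
  have T5 : r * h t x * u t x = -((1 / Fr ^ 2) * deriv (h t) x) := by
    rw [hu t x, hr]
    field_simp
  rw [T1, hsymm, hBx, T2, T3, T5]
  ring
end

section
/- Let T > 0, μ > 0, Fr > 0, r = 1/(μ Fr²), and let h, u : [0,T] × [0,1] → ℝ be smooth with h(t,x) > 0 everywhere, satisfying the viscous shallow water system with friction: ∂ₜh + ∂ₓ(h u) = 0 and ∂ₜ(h u) + ∂ₓ(h u²) − ∂ₓ(μ h ∂ₓu) + (1/Fr²) ∂ₓh + r h u = 0 on (0,T) × (0,1). Then the effective velocity v := u + μ ∂ₓh/h satisfies the damped transport equation ∂ₜv + u ∂ₓv + r v = 0 on (0,T) × (0,1). -/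
open Real Set Topology Filter

section helpers

variable {E : Type*} [NormedAddCommGroup E] [NormedSpace ℝ E]

lemma swf_sliceX {f : ℝ × ℝ → E} {p : ℝ × ℝ} (hf : DifferentiableAt ℝ f p) :
    HasDerivAt (fun y => f (p.1, y)) (fderiv ℝ f p (0, 1)) p.2 := by
  have hline : HasDerivAt (fun y : ℝ => ((p.1 : ℝ), y)) ((0 : ℝ), (1 : ℝ)) p.2 :=
    (hasDerivAt_const p.2 p.1).prodMk (hasDerivAt_id p.2)
  simpa [Function.comp_def] using hf.hasFDerivAt.comp_hasDerivAt p.2 hline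

lemma swf_sliceT {f : ℝ × ℝ → E} {p : ℝ × ℝ} (hf : DifferentiableAt ℝ f p) :
    HasDerivAt (fun s => f (s, p.2)) (fderiv ℝ f p (1, 0)) p.1 := by
  have hline : HasDerivAt (fun s : ℝ => (s, (p.2 : ℝ))) ((1 : ℝ), (0 : ℝ)) p.1 :=
    (hasDerivAt_id p.1).prodMk (hasDerivAt_const p.1 p.2)
  simpa [Function.comp_def] using hf.hasFDerivAt.comp_hasDerivAt p.1 hline

end helpers

lemma swf_sliceX_fderiv {f : ℝ × ℝ → ℝ} {p : ℝ × ℝ}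
    (hf : DifferentiableAt ℝ (fderiv ℝ f) p) (w : ℝ × ℝ) :
    HasDerivAt (fun y => fderiv ℝ f (p.1, y) w) (fderiv ℝ (fderiv ℝ f) p (0, 1) w) p.2 := by
  have h1 : HasDerivAt (fun y => fderiv ℝ f (p.1, y)) (fderiv ℝ (fderiv ℝ f) p (0, 1)) p.2 :=
    swf_sliceX hf
  simpa [Function.comp_def] using (ContinuousLinearMap.apply ℝ ℝ w).hasFDerivAt.comp_hasDerivAt p.2 h1

lemma swf_sliceT_fderiv {f : ℝ × ℝ → ℝ} {p : ℝ × ℝ}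
    (hf : DifferentiableAt ℝ (fderiv ℝ f) p) (w : ℝ × ℝ) :
    HasDerivAt (fun s => fderiv ℝ f (s, p.2) w) (fderiv ℝ (fderiv ℝ f) p (1, 0) w) p.1 := by
  have h1 : HasDerivAt (fun s => fderiv ℝ f (s, p.2)) (fderiv ℝ (fderiv ℝ f) p (1, 0)) p.1 :=
    swf_sliceT hf
  simpa [Function.comp_def] using (ContinuousLinearMap.apply ℝ ℝ w).hasFDerivAt.comp_hasDerivAt p.1 h1

lemma swf_algebra (μ c r A B Ht Hx Ut Ux Hxx Htx Uxx : ℝ)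
    (hA : A ≠ 0) (hcr : μ * r = c)
    (M : Ht + (Hx * B + A * Ux) = 0)
    (Mx : Htx + ((Hxx * B + Hx * Ux) + (Hx * Ux + A * Uxx)) = 0)
    (P : (Ht * B + A * Ut) + (Hx * B ^ 2 + A * (2 * B * Ux))
        - (μ * Hx * Ux + μ * A * Uxx) + c * Hx + r * A * B = 0) :
    Ut + (μ * Htx * A - μ * Hx * Ht) / A ^ 2
      + B * (Ux + (μ * Hxx * A - μ * Hx * Hx) / A ^ 2)
      + r * (B + μ * Hx / A) = 0 := by
  have hA2 : A ^ 2 ≠ 0 := pow_ne_zero 2 hA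
  field_simp
  linear_combination A * P + (μ * A) * Mx - (μ*Hx + A*B) * M + (A*Hx) * hcr

/-- For smooth `h, u` on `[0,T] × [0,1]` with `h > 0` solving the viscous
shallow water system with friction (`r = 1/(μ Fr²)`) on `(0,T) × (0,1)`, the effective
velocity `v := u + μ ∂ₓh / h` satisfies the damped transport equation
`∂ₜv + u ∂ₓv + r v = 0` on `(0,T) × (0,1)`. -/
theorem effectiveVelocity_dampedTransport
    (T μ Fr r : ℝ) (hT : 0 < T) (hμ : 0 < μ) (hFr : 0 < Fr) (hr : r = 1 / (μ * Fr ^ 2))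
    (h u : ℝ → ℝ → ℝ)
    (hsmooth : ContDiffOn ℝ (⊤ : ℕ∞) (fun p : ℝ × ℝ => h p.1 p.2) (Icc 0 T ×ˢ Icc 0 1))
    (usmooth : ContDiffOn ℝ (⊤ : ℕ∞) (fun p : ℝ × ℝ => u p.1 p.2) (Icc 0 T ×ˢ Icc 0 1))
    (hpos : ∀ t ∈ Icc (0:ℝ) T, ∀ x ∈ Icc (0:ℝ) 1, 0 < h t x)
    (hmass : ∀ t ∈ Ioo (0:ℝ) T, ∀ x ∈ Ioo (0:ℝ) 1,
        deriv (fun s => h s x) t + deriv (fun y => h t y * u t y) x = 0)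
    (hmom : ∀ t ∈ Ioo (0:ℝ) T, ∀ x ∈ Ioo (0:ℝ) 1,
        deriv (fun s => h s x * u s x) t
          + deriv (fun y => h t y * u t y ^ 2) x
          - deriv (fun y => μ * h t y * deriv (u t) y) x
          + (1 / Fr ^ 2) * deriv (h t) x
          + r * h t x * u t x = 0)
    (v : ℝ → ℝ → ℝ)
    (hv : ∀ t x, v t x = u t x + μ * deriv (h t) x / h t x) :
    ∀ t ∈ Ioo (0:ℝ) T, ∀ x ∈ Ioo (0:ℝ) 1,
      deriv (fun s => v s x) t + u t x * deriv (v t) x + r * v t x = 0 := by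
  intro t htI x hxI
  have htIcc : t ∈ Icc (0:ℝ) T := Ioo_subset_Icc_self htI
  have hxIcc : x ∈ Icc (0:ℝ) 1 := Ioo_subset_Icc_self hxI
  have hAne : h t x ≠ 0 := ne_of_gt (hpos t htIcc x hxIcc)
  -- pointwise smoothness on the interior
  have hFat : ∀ s ∈ Ioo (0:ℝ) T, ∀ y ∈ Ioo (0:ℝ) 1,
      ContDiffAt ℝ (⊤ : ℕ∞) (fun q : ℝ × ℝ => h q.1 q.2) (s, y) := fun s hs y hy =>
    hsmooth.contDiffAt (Filter.mem_of_superset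
      ((isOpen_Ioo.prod isOpen_Ioo).mem_nhds ⟨hs, hy⟩)
      (prod_mono Ioo_subset_Icc_self Ioo_subset_Icc_self))
  have hGat : ∀ s ∈ Ioo (0:ℝ) T, ∀ y ∈ Ioo (0:ℝ) 1,
      ContDiffAt ℝ (⊤ : ℕ∞) (fun q : ℝ × ℝ => u q.1 q.2) (s, y) := fun s hs y hy =>
    usmooth.contDiffAt (Filter.mem_of_superset
      ((isOpen_Ioo.prod isOpen_Ioo).mem_nhds ⟨hs, hy⟩)
      (prod_mono Ioo_subset_Icc_self Ioo_subset_Icc_self))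
  have dF : ∀ s ∈ Ioo (0:ℝ) T, ∀ y ∈ Ioo (0:ℝ) 1,
      DifferentiableAt ℝ (fun q : ℝ × ℝ => h q.1 q.2) (s, y) :=
    fun s hs y hy => (hFat s hs y hy).differentiableAt (by simp)
  have dG : ∀ s ∈ Ioo (0:ℝ) T, ∀ y ∈ Ioo (0:ℝ) 1,
      DifferentiableAt ℝ (fun q : ℝ × ℝ => u q.1 q.2) (s, y) :=
    fun s hs y hy => (hGat s hs y hy).differentiableAt (by simp)
  have dF' : ∀ s ∈ Ioo (0:ℝ) T, ∀ y ∈ Ioo (0:ℝ) 1,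
      DifferentiableAt ℝ (fderiv ℝ (fun q : ℝ × ℝ => h q.1 q.2)) (s, y) :=
    fun s hs y hy => ((hFat s hs y hy).fderiv_right (m := 1) (by exact WithTop.coe_le_coe.mpr le_top)).differentiableAt one_ne_zero
  have dG' : ∀ s ∈ Ioo (0:ℝ) T, ∀ y ∈ Ioo (0:ℝ) 1,
      DifferentiableAt ℝ (fderiv ℝ (fun q : ℝ × ℝ => u q.1 q.2)) (s, y) :=
    fun s hs y hy => ((hGat s hs y hy).fderiv_right (m := 1) (by exact WithTop.coe_le_coe.mpr le_top)).differentiableAt one_ne_zero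
  -- abbreviations for the partial derivatives at (t, x)
  set Ht := fderiv ℝ (fun q : ℝ × ℝ => h q.1 q.2) (t, x) (1, 0) with hHtdef
  set Hx := fderiv ℝ (fun q : ℝ × ℝ => h q.1 q.2) (t, x) (0, 1) with hHxdef
  set Ut := fderiv ℝ (fun q : ℝ × ℝ => u q.1 q.2) (t, x) (1, 0) with hUtdef
  set Ux := fderiv ℝ (fun q : ℝ × ℝ => u q.1 q.2) (t, x) (0, 1) with hUxdef
  set Htx := fderiv ℝ (fderiv ℝ (fun q : ℝ × ℝ => h q.1 q.2)) (t, x) (1, 0) (0, 1) with hHtxdef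
  set Hxt := fderiv ℝ (fderiv ℝ (fun q : ℝ × ℝ => h q.1 q.2)) (t, x) (0, 1) (1, 0) with hHxtdef
  set Hxx := fderiv ℝ (fderiv ℝ (fun q : ℝ × ℝ => h q.1 q.2)) (t, x) (0, 1) (0, 1) with hHxxdef
  set Uxx := fderiv ℝ (fderiv ℝ (fun q : ℝ × ℝ => u q.1 q.2)) (t, x) (0, 1) (0, 1) with hUxxdef
  -- first order slice derivatives at (t, x)
  have eHt : HasDerivAt (fun s => h s x) Ht t := swf_sliceT (dF t htI x hxI)
  have eHx : HasDerivAt (fun y => h t y) Hx x := swf_sliceX (dF t htI x hxI)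
  have eUt : HasDerivAt (fun s => u s x) Ut t := swf_sliceT (dG t htI x hxI)
  have eUx : HasDerivAt (fun y => u t y) Ux x := swf_sliceX (dG t htI x hxI)
  -- second order slice derivatives at (t, x)
  have eHxT : HasDerivAt (fun s => fderiv ℝ (fun q : ℝ × ℝ => h q.1 q.2) (s, x) (0, 1)) Htx t :=
    swf_sliceT_fderiv (dF' t htI x hxI) (0, 1)
  have eHtX : HasDerivAt (fun y => fderiv ℝ (fun q : ℝ × ℝ => h q.1 q.2) (t, y) (1, 0)) Hxt x :=
    swf_sliceX_fderiv (dF' t htI x hxI) (1, 0)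
  have eHxX : HasDerivAt (fun y => fderiv ℝ (fun q : ℝ × ℝ => h q.1 q.2) (t, y) (0, 1)) Hxx x :=
    swf_sliceX_fderiv (dF' t htI x hxI) (0, 1)
  have eUxX : HasDerivAt (fun y => fderiv ℝ (fun q : ℝ × ℝ => u q.1 q.2) (t, y) (0, 1)) Uxx x :=
    swf_sliceX_fderiv (dG' t htI x hxI) (0, 1)
  -- symmetry of second derivatives
  have sym : Hxt = Htx := by
    rw [hHxtdef, hHtxdef]
    exact ((hFat t htI x hxI).isSymmSndFDerivAt (by simpa using WithTop.coe_le_coe.mpr (le_top : (2 : ℕ∞) ≤ ⊤))).eq (0, 1) (1, 0)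
  -- eventuality of interior membership
  have evX : ∀ᶠ y in 𝓝 x, y ∈ Ioo (0:ℝ) 1 := isOpen_Ioo.eventually_mem hxI
  have evT : ∀ᶠ s in 𝓝 t, s ∈ Ioo (0:ℝ) T := isOpen_Ioo.eventually_mem htI
  -- the mass equation at (t, x)
  have em1 : deriv (fun s => h s x) t = Ht := eHt.deriv
  have em2 : deriv (fun y => h t y * u t y) x = Hx * u t x + h t x * Ux := (eHx.mul eUx).deriv
  have M0 := hmass t htI x hxI
  rw [em1, em2] at M0
  -- x-derivative of the mass equation at (t, x)
  have hasΨ : HasDerivAt (fun y =>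
        fderiv ℝ (fun q : ℝ × ℝ => h q.1 q.2) (t, y) (1, 0)
          + (fderiv ℝ (fun q : ℝ × ℝ => h q.1 q.2) (t, y) (0, 1) * u t y
              + h t y * fderiv ℝ (fun q : ℝ × ℝ => u q.1 q.2) (t, y) (0, 1)))
      (Hxt + ((Hxx * u t x + Hx * Ux) + (Hx * Ux + h t x * Uxx))) x :=
    eHtX.add ((eHxX.mul eUx).add (eHx.mul eUxX))
  have evΦ : (fun y => deriv (fun s => h s y) t + deriv (fun z => h t z * u t z) y)
      =ᶠ[𝓝 x] (fun y =>
        fderiv ℝ (fun q : ℝ × ℝ => h q.1 q.2) (t, y) (1, 0)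
          + (fderiv ℝ (fun q : ℝ × ℝ => h q.1 q.2) (t, y) (0, 1) * u t y
              + h t y * fderiv ℝ (fun q : ℝ × ℝ => u q.1 q.2) (t, y) (0, 1))) := by
    filter_upwards [evX] with y hy
    have a1 : deriv (fun s => h s y) t
        = fderiv ℝ (fun q : ℝ × ℝ => h q.1 q.2) (t, y) (1, 0) :=
      (swf_sliceT (dF t htI y hy)).deriv
    have a2 : deriv (fun z => h t z * u t z) y
        = fderiv ℝ (fun q : ℝ × ℝ => h q.1 q.2) (t, y) (0, 1) * u t y
            + h t y * fderiv ℝ (fun q : ℝ × ℝ => u q.1 q.2) (t, y) (0, 1) :=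
      ((swf_sliceX (dF t htI y hy)).mul (swf_sliceX (dG t htI y hy))).deriv
    rw [a1, a2]
  have evM : (fun y => deriv (fun s => h s y) t + deriv (fun z => h t z * u t z) y)
      =ᶠ[𝓝 x] (fun _ => (0:ℝ)) := by
    filter_upwards [evX] with y hy
    exact hmass t htI y hy
  have Mx0 : Hxt + ((Hxx * u t x + Hx * Ux) + (Hx * Ux + h t x * Uxx)) = 0 := by
    have hΦ : HasDerivAt (fun y => deriv (fun s => h s y) t + deriv (fun z => h t z * u t z) y)
        (Hxt + ((Hxx * u t x + Hx * Ux) + (Hx * Ux + h t x * Uxx))) x :=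
      hasΨ.congr_of_eventuallyEq evΦ
    have := hΦ.deriv
    rw [evM.deriv_eq, deriv_const] at this
    exact this.symm
  rw [sym] at Mx0
  -- the momentum equation at (t, x)
  have ep1 : deriv (fun s => h s x * u s x) t = Ht * u t x + h t x * Ut := (eHt.mul eUt).deriv
  have ep2 : deriv (fun y => h t y * u t y ^ 2) x
      = Hx * u t x ^ 2 + h t x * (2 * u t x * Ux) := by
    have := (eHx.fun_mul (eUx.fun_pow 2)).deriv
    rw [this]; push_cast; ring
  have hasRep3 : HasDerivAt
      (fun y => μ * h t y * fderiv ℝ (fun q : ℝ × ℝ => u q.1 q.2) (t, y) (0, 1))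
      (μ * Hx * Ux + μ * h t x * Uxx) x := by
    have := (eHx.const_mul μ).fun_mul eUxX
    convert this using 1 <;> try ring
  have evRep3 : (fun y => μ * h t y * deriv (u t) y)
      =ᶠ[𝓝 x] (fun y => μ * h t y * fderiv ℝ (fun q : ℝ × ℝ => u q.1 q.2) (t, y) (0, 1)) := by
    filter_upwards [evX] with y hy
    have a : deriv (u t) y = fderiv ℝ (fun q : ℝ × ℝ => u q.1 q.2) (t, y) (0, 1) :=
      (swf_sliceX (dG t htI y hy)).deriv
    rw [a]
  have ep3 : deriv (fun y => μ * h t y * deriv (u t) y) x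
      = μ * Hx * Ux + μ * h t x * Uxx :=
    (hasRep3.congr_of_eventuallyEq evRep3).deriv
  have ep4 : deriv (h t) x = Hx := eHx.deriv
  have P0 := hmom t htI x hxI
  rw [ep1, ep2, ep3, ep4, hr] at P0
  -- time derivative of the effective velocity
  have hasRepT : HasDerivAt
      (fun s => u s x + μ * fderiv ℝ (fun q : ℝ × ℝ => h q.1 q.2) (s, x) (0, 1) / h s x)
      (Ut + (μ * Htx * h t x - μ * Hx * Ht) / h t x ^ 2) t :=
    eUt.add ((eHxT.const_mul μ).div eHt hAne)
  have evRepT : (fun s => v s x) =ᶠ[𝓝 t]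
      (fun s => u s x + μ * fderiv ℝ (fun q : ℝ × ℝ => h q.1 q.2) (s, x) (0, 1) / h s x) := by
    filter_upwards [evT] with s hs
    have a : deriv (h s) x = fderiv ℝ (fun q : ℝ × ℝ => h q.1 q.2) (s, x) (0, 1) :=
      (swf_sliceX (dF s hs x hxI)).deriv
    rw [hv s x, a]
  have D1eq : deriv (fun s => v s x) t
      = Ut + (μ * Htx * h t x - μ * Hx * Ht) / h t x ^ 2 :=
    (hasRepT.congr_of_eventuallyEq evRepT).deriv
  -- space derivative of the effective velocity
  have hasRepX : HasDerivAt
      (fun y => u t y + μ * fderiv ℝ (fun q : ℝ × ℝ => h q.1 q.2) (t, y) (0, 1) / h t y)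
      (Ux + (μ * Hxx * h t x - μ * Hx * Hx) / h t x ^ 2) x :=
    eUx.add ((eHxX.const_mul μ).div eHx hAne)
  have evRepX : (v t) =ᶠ[𝓝 x]
      (fun y => u t y + μ * fderiv ℝ (fun q : ℝ × ℝ => h q.1 q.2) (t, y) (0, 1) / h t y) := by
    filter_upwards [evX] with y hy
    have a : deriv (h t) y = fderiv ℝ (fun q : ℝ × ℝ => h q.1 q.2) (t, y) (0, 1) :=
      (swf_sliceX (dF t htI y hy)).deriv
    rw [hv t y, a]
  have D2eq : deriv (v t) x = Ux + (μ * Hxx * h t x - μ * Hx * Hx) / h t x ^ 2 :=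
    (hasRepX.congr_of_eventuallyEq evRepX).deriv
  -- conclude by algebra
  rw [D1eq, D2eq, hv t x, ep4, hr]
  have hcr : μ * (1 / (μ * Fr ^ 2)) = 1 / Fr ^ 2 := by
    field_simp
  exact swf_algebra μ (1 / Fr ^ 2) (1 / (μ * Fr ^ 2)) (h t x) (u t x)
    Ht Hx Ut Ux Hxx Htx Uxx hAne hcr M0 Mx0 P0
end

section
/- Let 0 < ξ₀ < ξ₁ < ξ₂ < 1 and θ > 0, and set cₙ = sin(nπξ₀) − θ sin(nπξ₁) + sin(nπξ₂) for n ≥ 1. Then there exists T* > 0 such that for all s ∈ (0, T*): Σₙ₌₁^∞ n e^{−n²π²s} cₙ > 0 and Σₙ₌₁^∞ (−1)ⁿ n e^{−n²π²s} cₙ < 0. -/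
/-!
By the Jacobi theta transformation, `∑ n e^{-n²π²s} sin (nπξ)` is a positive multiple of the
method-of-images sum `oddKernel (ξ/2) X = ∑_{m ∈ ℤ} (m + ξ/2) e^{-π (m + ξ/2)² X}` at
`X = 1/(πs) → ∞`, where its term `m = 0` dominates up to `O(e^{-π (1 - ξ/2)² X})`. Hence near the
boundary point `0` the contribution of the point `ξ₀` closest to it beats all the others, and the
boundary point `1` reduces to this case by the reflection `ξ ↦ 1 - ξ`.
-/

open Real Set Filter Topology Asymptotics HurwitzZeta HurwitzKernelBounds

lemma oddKernel_eq_F_nat_one_sub (a : ℝ) {X : ℝ} (hX : 0 < X) :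
    oddKernel a X = F_nat 1 a X - F_nat 1 (1 - a) X := by
  have hpos : HasSum (fun n : ℕ ↦ ((n : ℤ) + a) * rexp (-π * ((n : ℤ) + a) ^ 2 * X))
      (F_nat 1 a X) := by
    refine (summable_f_nat 1 a hX).hasSum.congr_fun fun n ↦ ?_
    simp [f_nat]
  have hneg : HasSum (fun n : ℕ ↦ ((-(n + 1) : ℤ) + a) * rexp (-π * ((-(n + 1) : ℤ) + a) ^ 2 * X))
      (-F_nat 1 (1 - a) X) := by
    refine (summable_f_nat 1 (1 - a) hX).hasSum.neg.congr_fun fun n ↦ ?_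
    simp only [f_nat]
    push_cast
    ring_nf
  rw [sub_eq_add_neg]
  exact (hasSum_int_oddKernel a hX).unique (hpos.of_nat_of_neg_add_one hneg)

lemma F_nat_one_eq_mul_exp_add (a : ℝ) {X : ℝ} (hX : 0 < X) :
    F_nat 1 a X = a * rexp (-π * a ^ 2 * X) + F_nat 1 (a + 1) X := by
  rw [F_nat, (summable_f_nat 1 a hX).tsum_eq_zero_add, F_nat]
  simp only [f_nat]
  push_cast
  ring_nf

lemma isBigO_F_nat_one {b : ℝ} (hb : 0 ≤ b) :
    F_nat 1 b =O[atTop] fun X ↦ rexp (-π * b ^ 2 * X) := by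
  have hq : Tendsto (fun X ↦ rexp (-π * X)) atTop (𝓝 0) :=
    tendsto_exp_atBot.comp (tendsto_id.const_mul_atTop_of_neg (neg_lt_zero.mpr pi_pos))
  have hbounded : (fun X ↦ rexp (-π * X) / (1 - rexp (-π * X)) ^ 2 + b / (1 - rexp (-π * X)))
      =O[atTop] fun _ ↦ (1 : ℝ) := by
    refine Tendsto.isBigO_one ℝ (c := 0 / (1 - 0) ^ 2 + b / (1 - 0)) ?_
    exact (hq.div ((tendsto_const_nhds.sub hq).pow 2) (by simp)).add
      (tendsto_const_nhds.div (tendsto_const_nhds.sub hq) (by simp))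
  refine IsBigO.trans ?_ (((isBigO_refl _ _).mul hbounded).congr_right fun X ↦ mul_one _)
  refine Eventually.isBigO ?_
  filter_upwards [eventually_gt_atTop 0] with X hX
  refine (F_nat_one_le hb hX).trans_eq ?_
  rw [show -π * (b ^ 2 + 1) * X = -π * b ^ 2 * X + -π * X by ring, Real.exp_add]
  ring

lemma isBigO_exp_neg_pi_mul_of_le {p q : ℝ} (h : q ≤ p) :
    (fun X ↦ rexp (-π * p * X)) =O[atTop] fun X ↦ rexp (-π * q * X) := by
  simpa only [neg_mul] using isBigO_exp_neg_mul_of_le (mul_le_mul_of_nonneg_left h pi_pos.le)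

lemma isLittleO_exp_neg_pi_mul_of_lt {p q : ℝ} (h : q < p) :
    (fun X ↦ rexp (-π * p * X)) =o[atTop] fun X ↦ rexp (-π * q * X) := by
  refine isLittleO_exp_comp_exp_comp.mpr ?_
  have : Tendsto (fun X ↦ (π * (p - q)) * X) atTop atTop :=
    tendsto_id.const_mul_atTop (mul_pos pi_pos (sub_pos.mpr h))
  exact this.congr fun X ↦ by ring

lemma isBigO_oddKernel_sub {a : ℝ} (ha₀ : 0 ≤ a) (ha₁ : a ≤ 1) :
    (fun X ↦ oddKernel a X - a * rexp (-π * a ^ 2 * X)) =O[atTop]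
      fun X ↦ rexp (-π * (1 - a) ^ 2 * X) := by
  have hsplit : (fun X ↦ oddKernel a X - a * rexp (-π * a ^ 2 * X)) =ᶠ[atTop]
      fun X ↦ F_nat 1 (a + 1) X - F_nat 1 (1 - a) X := by
    filter_upwards [eventually_gt_atTop 0] with X hX
    rw [oddKernel_eq_F_nat_one_sub a hX, F_nat_one_eq_mul_exp_add a hX]
    ring
  refine hsplit.trans_isBigO (IsBigO.sub ?_ (isBigO_F_nat_one (by linarith)))
  exact (isBigO_F_nat_one (by linarith)).trans (isBigO_exp_neg_pi_mul_of_le (by nlinarith))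

lemma isLittleO_oddKernel_sub {a c : ℝ} (ha : 0 ≤ a) (hc : 0 ≤ c) (hac : a + c < 1) :
    (fun X ↦ oddKernel c X - c * rexp (-π * c ^ 2 * X)) =o[atTop]
      fun X ↦ rexp (-π * a ^ 2 * X) :=
  (isBigO_oddKernel_sub hc (by linarith)).trans_isLittleO
    (isLittleO_exp_neg_pi_mul_of_lt (by nlinarith))

lemma isLittleO_oddKernel {a b : ℝ} (ha : 0 ≤ a) (hab : a < b) (hb : a + b < 1) :
    oddKernel b =o[atTop] fun X ↦ rexp (-π * a ^ 2 * X) := by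
  have hmain := (isLittleO_exp_neg_pi_mul_of_lt (p := b ^ 2) (q := a ^ 2)
    (by nlinarith)).const_mul_left b
  refine ((isLittleO_oddKernel_sub ha (by linarith) hb).add hmain).congr_left fun X ↦ ?_
  ring

lemma eventually_oddKernel_sub_mul_add_pos {a b c : ℝ} (θ : ℝ) (ha : 0 < a) (hab : a < b)
    (hb : a + b < 1) (hc : 0 ≤ c) (hac : a + c < 1) :
    ∀ᶠ X in atTop, 0 < oddKernel a X - θ * oddKernel b X + oddKernel c X := by
  have hrem : (fun X ↦ (oddKernel a X - a * rexp (-π * a ^ 2 * X)) - θ * oddKernel b X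
      + (oddKernel c X - c * rexp (-π * c ^ 2 * X))) =o[atTop] fun X ↦ rexp (-π * a ^ 2 * X) :=
    ((isLittleO_oddKernel_sub ha.le ha.le (by linarith)).sub
      ((isLittleO_oddKernel ha.le hab hb).const_mul_left θ)).add
      (isLittleO_oddKernel_sub ha.le hc hac)
  filter_upwards [hrem.bound (half_pos ha)] with X hX
  rw [Real.norm_of_nonneg (exp_pos _).le, Real.norm_eq_abs] at hX
  have hmain := mul_pos ha (exp_pos (-π * a ^ 2 * X))
  have hc_term := mul_nonneg hc (exp_pos (-π * c ^ 2 * X)).le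
  linarith [neg_abs_le (oddKernel a X - a * rexp (-π * a ^ 2 * X) - θ * oddKernel b X
      + (oddKernel c X - c * rexp (-π * c ^ 2 * X)))]

lemma sinKernel_eq_oddKernel_inv_div (a : UnitAddCircle) {t : ℝ} (ht : 0 < t) :
    sinKernel a t = oddKernel a t⁻¹ / t ^ (3 / 2 : ℝ) := by
  rw [oddKernel_functional_equation, one_div, one_div, inv_inv, Real.inv_rpow ht.le, inv_inv,
    mul_div_cancel_left₀ _ (rpow_pos_of_pos ht _).ne']

lemma hasSum_pnat_mul_exp_mul_sin (ξ : ℝ) {s : ℝ} (hs : 0 < s) :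
    HasSum (fun n : ℕ+ ↦ (n : ℝ) * rexp (-(n : ℝ) ^ 2 * π ^ 2 * s) * sin (n * π * ξ))
      (oddKernel (ξ / 2 : ℝ) (π * s)⁻¹ / (π * s) ^ (3 / 2 : ℝ) / 2) := by
  have hπs := mul_pos pi_pos hs
  refine hasSum_pnat_iff (f := fun n : ℕ ↦ n * rexp (-(n : ℝ) ^ 2 * π ^ 2 * s) * sin (n * π * ξ))
    |>.mpr ?_
  rw [Nat.cast_zero, zero_mul, zero_mul, add_zero, ← sinKernel_eq_oddKernel_inv_div _ hπs]
  refine ((hasSum_nat_sinKernel (ξ / 2) hπs).div_const 2).congr_fun fun n ↦ ?_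
  ring_nf

lemma eventually_flux_pos {ξ₀ ξ₁ ξ₂ : ℝ} (θ : ℝ) (h₀ : 0 < ξ₀) (h₀₁ : ξ₀ < ξ₁) (h₁ : ξ₁ < 1)
    (h₂ : 0 ≤ ξ₂) (h₂₁ : ξ₂ ≤ 1) :
    ∀ᶠ s in 𝓝[>] 0, 0 < ∑' n : ℕ+, (n : ℝ) * rexp (-(n : ℝ) ^ 2 * π ^ 2 * s) *
      (sin (n * π * ξ₀) - θ * sin (n * π * ξ₁) + sin (n * π * ξ₂)) := by
  have hX : Tendsto (fun s : ℝ ↦ (π * s)⁻¹) (𝓝[>] 0) atTop := by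
    simpa only [mul_inv] using tendsto_inv_nhdsGT_zero.const_mul_atTop (inv_pos.mpr pi_pos)
  have hK := hX.eventually (eventually_oddKernel_sub_mul_add_pos θ (a := ξ₀ / 2) (b := ξ₁ / 2)
    (c := ξ₂ / 2) (by linarith) (by linarith) (by linarith) (by linarith) (by linarith))
  filter_upwards [hK, self_mem_nhdsWithin] with s hKs hs
  have hsum := ((hasSum_pnat_mul_exp_mul_sin ξ₀ hs).sub
    ((hasSum_pnat_mul_exp_mul_sin ξ₁ hs).mul_left θ)).add (hasSum_pnat_mul_exp_mul_sin ξ₂ hs)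
  rw [(hsum.congr_fun fun n ↦ by ring).tsum_eq]
  have hpow : 0 < (π * s) ^ (3 / 2 : ℝ) := rpow_pos_of_pos (mul_pos pi_pos hs) _
  exact (half_pos (div_pos hKs hpow)).trans_eq (by ring)

theorem dual_boundary_flux_signs_smallTime_general
    (ξ₀ ξ₁ ξ₂ : ℝ) (h0 : 0 < ξ₀) (h01 : ξ₀ < ξ₁) (h12 : ξ₁ < ξ₂) (h2 : ξ₂ < 1)
    (θ : ℝ)
    (c : ℕ+ → ℝ)
    (hc : ∀ n : ℕ+, c n = Real.sin (n * π * ξ₀) - θ * Real.sin (n * π * ξ₁)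
        + Real.sin (n * π * ξ₂)) :
    ∃ Tstar : ℝ, 0 < Tstar ∧ ∀ s ∈ Ioo (0:ℝ) Tstar,
      (0 < ∑' n : ℕ+, (n : ℝ) * Real.exp (-(n : ℝ) ^ 2 * π ^ 2 * s) * c n) ∧
      (∑' n : ℕ+, (-1 : ℝ) ^ (n : ℕ) * (n : ℝ) * Real.exp (-(n : ℝ) ^ 2 * π ^ 2 * s) * c n < 0) := by
  simp only [hc]
  have hleft := eventually_flux_pos θ h0 h01 (h12.trans h2) (by linarith) h2.le
  have hright := eventually_flux_pos θ (ξ₀ := 1 - ξ₂) (ξ₁ := 1 - ξ₁) (ξ₂ := 1 - ξ₀)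
    (by linarith) (by linarith) (by linarith) (by linarith) (by linarith)
  obtain ⟨T, hT, hsub⟩ := mem_nhdsGT_iff_exists_Ioo_subset.mp (hleft.and hright)
  refine ⟨T, hT, fun s hs ↦ ⟨(hsub hs).1, ?_⟩⟩
  have hmirror : ∀ n : ℕ+, (-1 : ℝ) ^ (n : ℕ) * n * rexp (-(n : ℝ) ^ 2 * π ^ 2 * s) *
      (sin (n * π * ξ₀) - θ * sin (n * π * ξ₁) + sin (n * π * ξ₂)) =
      -(n * rexp (-(n : ℝ) ^ 2 * π ^ 2 * s) *
        (sin (n * π * (1 - ξ₂)) - θ * sin (n * π * (1 - ξ₁)) + sin (n * π * (1 - ξ₀)))) := by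
    intro n
    simp only [mul_one_sub, sin_nat_mul_pi_sub]
    ring
  rw [tsum_congr hmirror, tsum_neg, neg_lt_zero]
  exact (hsub hs).2

/-- Let `0 < ξ₀ < ξ₁ < ξ₂ < 1`, `θ > 0`, and
`cₙ = sin(nπξ₀) − θ sin(nπξ₁) + sin(nπξ₂)`. There exists `T* > 0` such that for all
`s ∈ (0,T*)` one has `Σₙ₌₁^∞ n e^{−n²π²s} cₙ > 0` and `Σₙ₌₁^∞ (−1)ⁿ n e^{−n²π²s} cₙ < 0`
(positivity of the boundary fluxes of the dual backward heat solution). -/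
theorem dual_boundary_flux_signs_smallTime
    (ξ₀ ξ₁ ξ₂ : ℝ) (h0 : 0 < ξ₀) (h01 : ξ₀ < ξ₁) (h12 : ξ₁ < ξ₂) (h2 : ξ₂ < 1)
    (θ : ℝ) (hθ : 0 < θ)
    (c : ℕ+ → ℝ)
    (hc : ∀ n : ℕ+, c n = Real.sin (n * π * ξ₀) - θ * Real.sin (n * π * ξ₁)
        + Real.sin (n * π * ξ₂)) :
    ∃ Tstar : ℝ, 0 < Tstar ∧ ∀ s ∈ Ioo (0:ℝ) Tstar,
      (0 < ∑' n : ℕ+, (n : ℝ) * Real.exp (-(n : ℝ) ^ 2 * π ^ 2 * s) * c n) ∧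
      (∑' n : ℕ+, (-1 : ℝ) ^ (n : ℕ) * (n : ℝ) * Real.exp (-(n : ℝ) ^ 2 * π ^ 2 * s) * c n < 0) :=
  dual_boundary_flux_signs_smallTime_general ξ₀ ξ₁ ξ₂ h0 h01 h12 h2 θ c hc
end

section
/- For every ξ ∈ (0,1) and every s > 0, one has Σₙ₌₁^∞ n e^{−n²π²s} sin(nπξ) > 0. -/
open Real Set

open HurwitzZeta

/-!
The series is `sinKernel (ξ/2) (π s) / 2`, and `sinKernel a x > 0` for `a ∈ (0, 1/2)`, `x > 0`.
For `x ≥ π/8` the first term `2 sin(2πa) e^{-πx}` dominates, since `|sin(nθ)| ≤ n sin θ` and the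
other terms decay like `(4 e^{-3πx})^n`. For `x ≤ π/8` the functional equation turns `sinKernel`
into the odd kernel `∑_{n ∈ ℤ} g(n + a)`, `g(u) = u e^{-βu²}` with `β = π/x ≥ 8`. If `2βa² ≥ 1`,
then `g` decreases on `[a, ∞)` and pairing `n + a` with `-(n + 1) + a` gives positive pairs.
Otherwise `a ≤ 1/4`; pairing `n + a` with `-n + a`, the pairs for `n ≥ 1` are `O(a β e^{-9β/16})`
and geometrically decaying, so the term `g(a) ≥ a e^{-1/2}` dominates.
-/

theorem abs_sin_nat_mul_le (θ : ℝ) (m : ℕ) : |sin (m * θ)| ≤ m * |sin θ| := by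
  induction m with
  | zero => simp
  | succ m ih =>
    calc |sin ((m + 1 : ℕ) * θ)| = |sin (m * θ) * cos θ + cos (m * θ) * sin θ| := by
          push_cast; rw [add_mul, one_mul, sin_add]
      _ ≤ |sin (m * θ)| * |cos θ| + |cos (m * θ)| * |sin θ| := by
          rw [← abs_mul, ← abs_mul]; exact abs_add_le _ _
      _ ≤ |sin (m * θ)| * 1 + 1 * |sin θ| := by
          gcongr
          · exact abs_cos_le_one θ
          · exact abs_cos_le_one _
      _ ≤ ((m + 1 : ℕ) : ℝ) * |sin θ| := by push_cast; linarith

theorem pow_le_exp_natCast (n : ℕ) : (2.7182818283 : ℝ) ^ n ≤ exp n := by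
  rw [← exp_one_pow]
  exact pow_le_pow_left₀ (by norm_num) exp_one_gt_d9.le n

theorem neg_div_one_sub_le_tsum {f : ℕ → ℝ} (hf : Summable f) {C ρ : ℝ} (hρ₀ : 0 ≤ ρ)
    (hρ₁ : ρ < 1) (h : ∀ n, -(C * ρ ^ n) ≤ f n) : -(C / (1 - ρ)) ≤ ∑' n, f n := by
  have hgeom : HasSum (fun n ↦ -(C * ρ ^ n)) (-(C / (1 - ρ))) := by
    simpa only [div_eq_mul_inv] using ((hasSum_geometric_of_lt_one hρ₀ hρ₁).mul_left C).neg
  exact hgeom.tsum_eq ▸ hgeom.summable.tsum_le_tsum h hf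

theorem sq_mul_exp_le_geometric {γ : ℝ} (hγ : 0 ≤ γ) (n : ℕ) :
    ((n : ℝ) + 1) ^ 2 * exp (-γ * (((n : ℝ) + 1) ^ 2 - 1)) ≤ (4 * exp (-3 * γ)) ^ n := by
  have hsq : ((n : ℝ) + 1) ^ 2 ≤ 4 ^ n := by
    have : (n : ℝ) + 1 ≤ 2 ^ n := by exact_mod_cast Nat.lt_two_pow_self
    calc ((n : ℝ) + 1) ^ 2 ≤ ((2 : ℝ) ^ n) ^ 2 := by gcongr
      _ = 4 ^ n := by rw [← pow_mul, mul_comm, pow_mul]; norm_num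
  have hexp : exp (-γ * (((n : ℝ) + 1) ^ 2 - 1)) ≤ exp (-3 * γ) ^ n := by
    rw [← exp_nat_mul, exp_le_exp]
    have : (n : ℝ) ≤ n ^ 2 := by exact_mod_cast Nat.le_self_pow two_ne_zero n
    nlinarith
  rw [mul_pow]
  exact mul_le_mul hsq hexp (exp_pos _).le (by positivity)

noncomputable def oddGaussian (β u : ℝ) : ℝ := u * exp (-β * u ^ 2)

theorem oddGaussian_neg (β u : ℝ) : oddGaussian β (-u) = -oddGaussian β u := by
  simp only [oddGaussian, neg_sq, neg_mul]

theorem hasSum_int_oddGaussian (a : ℝ) {x : ℝ} (hx : 0 < x) :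
    HasSum (fun n : ℤ ↦ oddGaussian (π * x) (n + a)) (oddKernel a x) :=
  (hasSum_int_oddKernel a hx).congr_fun fun n ↦ by simp only [oddGaussian]; ring_nf

theorem hasDerivAt_oddGaussian (β u : ℝ) :
    HasDerivAt (oddGaussian β) ((1 - 2 * β * u ^ 2) * exp (-β * u ^ 2)) u := by
  have h := (hasDerivAt_id' u).mul (((hasDerivAt_pow 2 u).const_mul (-β)).exp)
  exact h.congr_deriv (by push_cast; ring)

theorem strictAntiOn_oddGaussian {β a : ℝ} (ha : 0 < a) (h : 1 ≤ 2 * β * a ^ 2) :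
    StrictAntiOn (oddGaussian β) (Ici a) := by
  have hβ : 0 < β := by nlinarith [sq_nonneg a]
  refine strictAntiOn_of_deriv_neg (convex_Ici a)
    (fun u _ ↦ (hasDerivAt_oddGaussian β u).continuousAt.continuousWithinAt) fun u hu ↦ ?_
  rw [interior_Ici, mem_Ioi] at hu
  rw [(hasDerivAt_oddGaussian β u).deriv]
  have : a ^ 2 < u ^ 2 := by gcongr
  exact mul_neg_of_neg_of_pos (by nlinarith) (exp_pos _)

theorem pos_of_hasSum_int_oddGaussian_of_one_le {β a K : ℝ} (ha₀ : 0 < a) (ha₁ : a < 1 / 2)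
    (h : 1 ≤ 2 * β * a ^ 2) (hK : HasSum (fun n : ℤ ↦ oddGaussian β (n + a)) K) : 0 < K := by
  have hpair : HasSum (fun n : ℕ ↦ oddGaussian β (n + a) - oddGaussian β (n + 1 - a)) K :=
    hK.nat_add_neg_add_one.congr_fun fun n ↦ by
      rw [sub_eq_add_neg, ← oddGaussian_neg]; push_cast; ring_nf
  have hpos (n : ℕ) : 0 < oddGaussian β (n + a) - oddGaussian β (n + 1 - a) := by
    have hn : (0 : ℝ) ≤ n := n.cast_nonneg
    exact sub_pos.mpr <| strictAntiOn_oddGaussian ha₀ h (by rw [mem_Ici]; linarith)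
      (by rw [mem_Ici]; linarith) (by linarith)
  exact hasSum_lt (fun n ↦ (hpos n).le) (hpos 0) hasSum_zero hpair

theorem oddGaussian_sub_oddGaussian_le {β a m : ℝ} (ha : 0 ≤ a) (hm : 0 ≤ m) :
    oddGaussian β (m - a) - oddGaussian β (m + a) ≤
      4 * β * a * m ^ 2 * exp (-β * (m - a) ^ 2) := by
  set A := exp (-β * (m - a) ^ 2)
  set E := exp (-(4 * β * a * m))
  have hsplit : exp (-β * (m + a) ^ 2) = A * E := by rw [← exp_add]; ring_nf
  have hE : 1 - E ≤ 4 * β * a * m := by linarith [add_one_le_exp (-(4 * β * a * m))]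
  have hE₀ : 0 ≤ E := (exp_pos _).le
  have hA₀ : 0 ≤ A := (exp_pos _).le
  simp only [oddGaussian]
  rw [hsplit]
  calc (m - a) * A - (m + a) * (A * E) = A * (m * (1 - E) - a * (1 + E)) := by ring
    _ ≤ A * (m * (4 * β * a * m)) := by
        gcongr
        nlinarith [mul_le_mul_of_nonneg_left hE hm, mul_nonneg ha (by linarith : 0 ≤ 1 + E)]
    _ = 4 * β * a * m ^ 2 * A := by ring

theorem oddGaussian_natCast_succ_sub_le {β a : ℝ} (hβ : 0 ≤ β) (ha₀ : 0 ≤ a) (ha : a ≤ 1 / 4)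
    (n : ℕ) :
    oddGaussian β ((n + 1 : ℕ) - a) - oddGaussian β ((n + 1 : ℕ) + a) ≤
      4 * β * a * exp (-(9 / 16) * β) * (4 * exp (-3 * (9 / 16 * β))) ^ n := by
  set m : ℝ := ((n + 1 : ℕ) : ℝ)
  have hm : 1 ≤ m := by simp [m]
  -- `a ≤ 1/4 ≤ m/4`, so `(m - a)² ≥ (9/16) m²`
  have hA : exp (-β * (m - a) ^ 2) ≤ exp (-(9 / 16) * β) * exp (-(9 / 16 * β) * (m ^ 2 - 1)) := by
    rw [← exp_add, exp_le_exp]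
    have : 9 / 16 * m ^ 2 ≤ (m - a) ^ 2 := by nlinarith
    nlinarith
  calc oddGaussian β (m - a) - oddGaussian β (m + a)
      ≤ 4 * β * a * m ^ 2 * exp (-β * (m - a) ^ 2) :=
        oddGaussian_sub_oddGaussian_le ha₀ (by linarith)
    _ ≤ 4 * β * a * m ^ 2 * (exp (-(9 / 16) * β) * exp (-(9 / 16 * β) * (m ^ 2 - 1))) := by
        gcongr
    _ = 4 * β * a * exp (-(9 / 16) * β) * (m ^ 2 * exp (-(9 / 16 * β) * (m ^ 2 - 1))) := by ring
    _ ≤ 4 * β * a * exp (-(9 / 16) * β) * (4 * exp (-3 * (9 / 16 * β))) ^ n := by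
        gcongr
        simpa [m] using sq_mul_exp_le_geometric (by positivity : 0 ≤ 9 / 16 * β) n

theorem four_mul_mul_exp_lt {β : ℝ} (hβ : 8 ≤ β) :
    4 * β * exp (-(9 / 16) * β) < (1 - 4 * exp (-3 * (9 / 16 * β))) * exp (-(1 / 2)) := by
  set y := 9 / 16 * β with hy_def
  have hy : 9 / 2 ≤ y := by linarith
  -- `e^(y - 9/2) ≥ y - 7/2 ≥ (2/9) y`, hence `y e^(-y) ≤ (9/2) e^(-9/2)`
  have hlin : y * exp (-y) ≤ 9 / 2 * exp (-(9 / 2)) := by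
    have h := add_one_le_exp (y - 9 / 2)
    have hsplit : exp (-(9 / 2)) = exp (y - 9 / 2) * exp (-y) := by rw [← exp_add]; ring_nf
    rw [hsplit]
    nlinarith [exp_pos (-y)]
  have hρ : 4 * exp (-3 * y) ≤ 1 / 128 := by
    have h9 : 512 ≤ exp 9 := (by norm_num : (512 : ℝ) ≤ 2.7182818283 ^ 9).trans
      (by exact_mod_cast pow_le_exp_natCast 9)
    have h3y : 512 ≤ exp (3 * y) := h9.trans (exp_le_exp.mpr (by linarith))
    have hinv : exp (-3 * y) * exp (3 * y) = 1 := by rw [← exp_add]; simp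
    nlinarith [exp_pos (-3 * y)]
  have h4 : 53 ≤ exp 4 := (by norm_num : (53 : ℝ) ≤ 2.7182818283 ^ 4).trans
      (by exact_mod_cast pow_le_exp_natCast 4)
  have hsplit : exp (-(1 / 2)) = exp 4 * exp (-(9 / 2)) := by rw [← exp_add]; norm_num
  have hβy : 4 * β * exp (-(9 / 16) * β) = 64 / 9 * (y * exp (-y)) := by
    simp only [y]; ring_nf
  have hbig : 32 < (1 - 4 * exp (-3 * y)) * exp 4 := by nlinarith
  rw [hβy, hsplit, ← mul_assoc]
  nlinarith [mul_lt_mul_of_pos_right hbig (exp_pos (-(9 / 2)))]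

theorem pos_of_hasSum_int_oddGaussian_of_lt {β a K : ℝ} (ha : 0 < a) (hβ : 8 ≤ β)
    (h : 2 * β * a ^ 2 < 1) (hK : HasSum (fun n : ℤ ↦ oddGaussian β (n + a)) K) : 0 < K := by
  set C := 4 * β * a * exp (-(9 / 16) * β)
  set ρ := 4 * exp (-3 * (9 / 16 * β))
  have ha₄ : a ≤ 1 / 4 := by nlinarith
  have hpair : HasSum (fun n : ℕ ↦ oddGaussian β (n + a) - oddGaussian β (n - a))
      (K + oddGaussian β a) := by
    have := hK.nat_add_neg
    simp only [Int.cast_zero, zero_add, Int.cast_neg, Int.cast_natCast] at this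
    refine this.congr_fun fun n ↦ ?_
    rw [sub_eq_add_neg, ← oddGaussian_neg]
    ring_nf
  have hdom : C < (1 - ρ) * (a * exp (-(1 / 2))) := by
    have := mul_lt_mul_of_pos_left (four_mul_mul_exp_lt hβ) ha
    simp only [C, ρ]; linarith
  have hρ : 0 < 1 - ρ :=
    pos_of_mul_pos_left ((by positivity : 0 < C).trans hdom) (by positivity)
  have htail : -(C / (1 - ρ)) ≤
      ∑' n : ℕ, (oddGaussian β ((n + 1 : ℕ) + a) - oddGaussian β ((n + 1 : ℕ) - a)) := by
    refine neg_div_one_sub_le_tsum ((summable_nat_add_iff 1).mpr hpair.summable) (by positivity)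
      (by linarith) fun n ↦ ?_
    have := oddGaussian_natCast_succ_sub_le (by positivity : 0 ≤ β) ha.le ha₄ n
    linarith
  have hsplit : K + oddGaussian β a = 2 * oddGaussian β a +
      ∑' n : ℕ, (oddGaussian β ((n + 1 : ℕ) + a) - oddGaussian β ((n + 1 : ℕ) - a)) := by
    rw [← hpair.tsum_eq, hpair.summable.tsum_eq_zero_add]
    simp only [CharP.cast_eq_zero, zero_add, zero_sub, oddGaussian_neg, sub_neg_eq_add,
      Nat.cast_add, Nat.cast_one, add_left_inj]
    ring
  have hga : a * exp (-(1 / 2)) < oddGaussian β a := by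
    unfold oddGaussian
    gcongr
    linarith
  have := (div_lt_iff₀ hρ).mpr (by linarith : C < a * exp (-(1 / 2)) * (1 - ρ))
  linarith

theorem oddKernel_pos {a x : ℝ} (ha₀ : 0 < a) (ha₁ : a < 1 / 2) (hx : 8 ≤ π * x) :
    0 < oddKernel a x := by
  have hK := hasSum_int_oddGaussian a (pos_of_mul_pos_right (by linarith) pi_pos.le)
  rcases le_or_gt 1 (2 * (π * x) * a ^ 2) with h | h
  · exact pos_of_hasSum_int_oddGaussian_of_one_le ha₀ ha₁ h hK
  · exact pos_of_hasSum_int_oddGaussian_of_lt ha₀ hx h hK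

theorem sinKernel_pos_of_le {a x : ℝ} (ha₀ : 0 < a) (ha₁ : a < 1 / 2) (hx₀ : 0 < x)
    (hx : x ≤ π / 8) : 0 < sinKernel a x := by
  have hodd : 0 < oddKernel a (1 / x) :=
    oddKernel_pos ha₀ ha₁ (by rw [mul_one_div, le_div_iff₀ hx₀]; linarith)
  rw [oddKernel_functional_equation, one_div_one_div] at hodd
  exact pos_of_mul_pos_right hodd (by positivity)

theorem abs_sinKernel_term_le {θ x : ℝ} (hθ : 0 ≤ sin θ) (hx : 0 ≤ x) (n : ℕ) :
    |2 * ((n + 1 : ℕ) : ℝ) * sin (θ * (n + 1 : ℕ)) * exp (-π * ((n + 1 : ℕ) : ℝ) ^ 2 * x)| ≤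
      2 * sin θ * exp (-π * x) * (4 * exp (-3 * (π * x))) ^ n := by
  set m : ℝ := ((n + 1 : ℕ) : ℝ)
  have hsin : |sin (θ * m)| ≤ m * sin θ := by
    simpa only [mul_comm θ, abs_of_nonneg hθ] using abs_sin_nat_mul_le θ (n + 1)
  have hexp : exp (-π * m ^ 2 * x) = exp (-π * x) * exp (-(π * x) * (m ^ 2 - 1)) := by
    rw [← exp_add]; ring_nf
  calc |2 * m * sin (θ * m) * exp (-π * m ^ 2 * x)|
      = 2 * m * |sin (θ * m)| * exp (-π * m ^ 2 * x) := by
        rw [abs_mul, abs_mul, abs_of_nonneg (by positivity : 0 ≤ 2 * m),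
          abs_of_pos (exp_pos _)]
    _ ≤ 2 * m * (m * sin θ) * exp (-π * m ^ 2 * x) := by gcongr
    _ = 2 * sin θ * exp (-π * x) * (m ^ 2 * exp (-(π * x) * (m ^ 2 - 1))) := by
        rw [hexp]; ring
    _ ≤ 2 * sin θ * exp (-π * x) * (4 * exp (-3 * (π * x))) ^ n := by
        gcongr
        simpa [m] using sq_mul_exp_le_geometric (by positivity : 0 ≤ π * x) n

theorem sinKernel_pos_of_ge {a x : ℝ} (ha₀ : 0 < a) (ha₁ : a < 1 / 2) (hx : π / 8 ≤ x) :
    0 < sinKernel a x := by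
  have hx₀ : 0 < x := by linarith [pi_pos]
  set θ := 2 * π * a
  set t : ℕ → ℝ := fun n ↦ 2 * n * sin (θ * n) * exp (-π * n ^ 2 * x)
  have hsum : HasSum t (sinKernel a x) := hasSum_nat_sinKernel a hx₀
  have hθ : 0 < sin θ := sin_pos_of_pos_of_lt_pi (by positivity) (by nlinarith [pi_pos])
  set c := 2 * sin θ * exp (-π * x)
  set ρ := 4 * exp (-3 * (π * x))
  have hρ : ρ ≤ 1 / 4 := by
    have h3 : 16 ≤ exp 3 := (by norm_num : (16 : ℝ) ≤ 2.7182818283 ^ 3).trans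
      (by exact_mod_cast pow_le_exp_natCast 3)
    have h3x : 16 ≤ exp (3 * (π * x)) := h3.trans (exp_le_exp.mpr (by nlinarith [pi_gt_three]))
    have hinv : exp (-3 * (π * x)) * exp (3 * (π * x)) = 1 := by rw [← exp_add]; simp
    nlinarith [exp_pos (-3 * (π * x))]
  have htail : -((c * ρ) / (1 - ρ)) ≤ ∑' n, t (n + 2) := by
    refine neg_div_one_sub_le_tsum ((summable_nat_add_iff 2).mpr hsum.summable) (by positivity)
      (by linarith) fun n ↦ neg_le_of_abs_le ?_
    rw [mul_assoc, ← pow_succ']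
    exact abs_sinKernel_term_le hθ.le hx₀.le (n + 1)
  have hsplit : sinKernel a x = c + ∑' n, t (n + 2) := by
    rw [← hsum.tsum_eq, hsum.summable.tsum_eq_zero_add,
      ((summable_nat_add_iff 1).mpr hsum.summable).tsum_eq_zero_add]
    show t 0 + (t 1 + ∑' n, t (n + 2)) = c + ∑' n, t (n + 2)
    rw [show t 0 = 0 by simp [t], show t 1 = c by simp [t, c], zero_add]
  have hc : 0 < c := by positivity
  have : c * ρ / (1 - ρ) < c := by
    rw [div_lt_iff₀ (by linarith)]; nlinarith
  linarith

theorem sinKernel_pos {a x : ℝ} (ha₀ : 0 < a) (ha₁ : a < 1 / 2) (hx : 0 < x) :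
    0 < sinKernel a x := by
  rcases le_total x (π / 8) with h | h
  · exact sinKernel_pos_of_le ha₀ ha₁ hx h
  · exact sinKernel_pos_of_ge ha₀ ha₁ h

/-- For every `ξ ∈ (0,1)` and every `s > 0`,
`Σₙ₌₁^∞ n e^{−n²π²s} sin(nπξ) > 0` (positivity of the left boundary heat flux of the
Dirichlet heat solution started from the Dirac measure `δ_ξ`). -/
theorem dirac_boundary_flux_pos
    (ξ : ℝ) (hξ : ξ ∈ Ioo (0:ℝ) 1) (s : ℝ) (hs : 0 < s) :
    0 < ∑' n : ℕ+, (n : ℝ) * Real.exp (-(n : ℝ) ^ 2 * π ^ 2 * s) * Real.sin (n * π * ξ) := by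
  have hsum : HasSum (fun n : ℕ ↦ (n : ℝ) * exp (-(n : ℝ) ^ 2 * π ^ 2 * s) * sin (n * π * ξ))
      (sinKernel ↑(ξ / 2) (π * s) / 2) := by
    refine ((hasSum_nat_sinKernel (ξ / 2) (by positivity)).div_const 2).congr_fun fun n ↦ ?_
    ring_nf
  calc 0 < sinKernel ↑(ξ / 2) (π * s) / 2 :=
        half_pos (sinKernel_pos (by linarith [hξ.1]) (by linarith [hξ.2]) (by positivity))
    _ = _ := hsum.tsum_eq.symm.trans (tsum_pnat_eq_tsum_of_eq_zero (by simp)).symm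
end

section
/- Let C* > 0 and δ ∈ (0, 1/2). Let U ∈ L²(0,1) satisfy ‖U‖_{L²(0,1)} ≤ C*, U(x) ≥ δ x for a.e. x ∈ (0, δ), and U(x) ≥ δ (1 − x) for a.e. x ∈ (1 − δ, 1). Let E = (δ/4, 3δ/4) ∪ (1 − 3δ/4, 1 − δ/4), and let h₀ : [0,1] → ℝ be measurable with h₀(x) = 4C*/δ³ for x ∈ E and 0 ≤ h₀(x) ≤ 1 for x ∈ [0,1] \ E. Then ∫₀¹ U(x) h₀(x) dx ≥ C* > 0. -/
/-!
On each of the two intervals of `E` the lower bounds on `U` give `∫ U ≥ δ³/4`, so the part of the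
pairing carried by `E` is at least `(4C*/δ³) · δ³/2 = 2C*`. Off `E` we have `0 ≤ h₀ ≤ 1`, so that
part costs at most `∫₀¹ |U| ≤ ‖U‖_{L²(0,1)} ≤ C*`.
-/

open Set MeasureTheory

theorem integral_abs_le_of_integral_sq_le {α : Type*} [MeasurableSpace α] {μ : Measure α}
    [IsFiniteMeasure μ] {f : α → ℝ} {C : ℝ} (hC : 0 < C) (hμ : μ.real univ ≤ 1)
    (hf : Integrable f μ) (hf2 : Integrable (fun x => f x ^ 2) μ)
    (hnorm : ∫ x, f x ^ 2 ∂μ ≤ C ^ 2) :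
    ∫ x, |f x| ∂μ ≤ C := by
  have amgm : ∀ x, |f x| ≤ f x ^ 2 / (2 * C) + C / 2 := by
    intro x
    rw [div_add_div _ _ (by positivity) two_ne_zero, le_div_iff₀ (by positivity)]
    nlinarith [sq_abs (f x), sq_nonneg (|f x| - C)]
  calc ∫ x, |f x| ∂μ ≤ ∫ x, (f x ^ 2 / (2 * C) + C / 2) ∂μ :=
        integral_mono hf.abs ((hf2.div_const _).add (integrable_const _)) amgm
    _ = (∫ x, f x ^ 2 ∂μ) / (2 * C) + μ.real univ * (C / 2) := by
        rw [integral_add (hf2.div_const _) (integrable_const _), integral_div, integral_const,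
          smul_eq_mul]
    _ ≤ C ^ 2 / (2 * C) + 1 * (C / 2) := by gcongr
    _ = C := by field_simp; ring

theorem intervalIntegral_affine (a b p q : ℝ) :
    ∫ x in a..b, (p + q * x) = p * (b - a) + q * ((b ^ 2 - a ^ 2) / 2) := by
  rw [intervalIntegral.integral_add intervalIntegrable_const
      ((continuous_const_mul q).intervalIntegrable a b),
    intervalIntegral.integral_const, intervalIntegral.integral_const_mul, integral_id, smul_eq_mul]
  ring

theorem le_setIntegral_Ioo_of_ae_affine_le {f : ℝ → ℝ} {a b p q : ℝ} (hab : a ≤ b)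
    (hf : IntegrableOn f (Ioo a b)) (h : ∀ᵐ x, x ∈ Ioo a b → p + q * x ≤ f x) :
    p * (b - a) + q * ((b ^ 2 - a ^ 2) / 2) ≤ ∫ x in Ioo a b, f x := by
  rw [← intervalIntegral_affine, intervalIntegral.integral_of_le hab,
    integral_Ioc_eq_integral_Ioo]
  have haff : Continuous fun x : ℝ => p + q * x := by fun_prop
  exact setIntegral_mono_on_ae (haff.integrableOn_Icc.mono_set Ioo_subset_Icc_self) hf
    measurableSet_Ioo h

theorem neg_abs_le_mul_of_mem_Icc {u h : ℝ} (hh : h ∈ Icc (0 : ℝ) 1) : -|u| ≤ u * h :=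
  calc -|u| ≤ -|u * h| := by
        rw [abs_mul, abs_of_nonneg hh.1]
        exact neg_le_neg (mul_le_of_le_one_right (abs_nonneg u) hh.2)
    _ ≤ u * h := neg_abs_le _

theorem sub_integral_abs_le_setIntegral_mul {α : Type*} [MeasurableSpace α] {μ : Measure α}
    {s t : Set α} {f h : α → ℝ} {M : ℝ} (hs : MeasurableSet s) (ht : MeasurableSet t)
    (hts : t ⊆ s) (hf : IntegrableOn f s μ) (hh : AEStronglyMeasurable h (μ.restrict s))
    (h_eq : ∀ x ∈ t, h x = M) (h_off : ∀ x ∈ s \ t, h x ∈ Icc (0 : ℝ) 1) :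
    M * ∫ x in t, f x ∂μ - ∫ x in s, |f x| ∂μ ≤ ∫ x in s, f x * h x ∂μ := by
  have h_bdd : ∀ x ∈ s, ‖h x‖ ≤ max 1 |M| := by
    intro x hx
    by_cases hxt : x ∈ t
    · rw [h_eq x hxt, Real.norm_eq_abs]; exact le_max_right _ _
    · obtain ⟨h0, h1⟩ := h_off x ⟨hx, hxt⟩
      rw [Real.norm_eq_abs, abs_of_nonneg h0]; exact h1.trans (le_max_left _ _)
  have hind : IntegrableOn (t.indicator fun x => M * f x) s μ := (hf.const_mul M).indicator ht
  have hfh : IntegrableOn (fun x => f x * h x) s μ :=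
    hf.mul_bdd hh (ae_restrict_of_forall_mem hs h_bdd)
  calc M * ∫ x in t, f x ∂μ - ∫ x in s, |f x| ∂μ
      = ∫ x in s, (t.indicator (fun x => M * f x) x - |f x|) ∂μ := by
        rw [integral_sub hind hf.abs, setIntegral_indicator ht, inter_eq_right.2 hts,
          integral_const_mul]
    _ ≤ ∫ x in s, f x * h x ∂μ := by
        refine setIntegral_mono_on (hind.sub hf.abs) hfh hs fun x hx => ?_
        by_cases hxt : x ∈ t
        · rw [indicator_of_mem hxt, h_eq x hxt, mul_comm]
          linarith [abs_nonneg (f x)]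
        · rw [indicator_of_notMem hxt, zero_sub]
          exact neg_abs_le_mul_of_mem_Icc (h_off x ⟨hx, hxt⟩)

theorem cube_div_two_le_setIntegral_boundary_layers {δ : ℝ} {U : ℝ → ℝ}
    (hδ : δ ∈ Ioo (0:ℝ) (1/2)) (hU : IntegrableOn U (Ioo 0 1))
    (hUlow0 : ∀ᵐ x, x ∈ Ioo (0:ℝ) δ → δ * x ≤ U x)
    (hUlow1 : ∀ᵐ x, x ∈ Ioo (1 - δ) 1 → δ * (1 - x) ≤ U x) :
    δ ^ 3 / 2 ≤ ∫ x in Ioo (δ/4) (3*δ/4) ∪ Ioo (1 - 3*δ/4) (1 - δ/4), U x := by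
  obtain ⟨hδ0, hδ2⟩ := hδ
  have hleft := le_setIntegral_Ioo_of_ae_affine_le (a := δ/4) (b := 3*δ/4) (p := 0) (q := δ)
    (by linarith) (hU.mono_set (Ioo_subset_Ioo (by linarith) (by linarith))) (by
      filter_upwards [hUlow0] with x hx hxI
      linarith [hx ⟨by linarith [hxI.1], by linarith [hxI.2]⟩])
  have hright := le_setIntegral_Ioo_of_ae_affine_le (a := 1 - 3*δ/4) (b := 1 - δ/4) (p := δ)
    (q := -δ) (by linarith) (hU.mono_set (Ioo_subset_Ioo (by linarith) (by linarith))) (by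
      filter_upwards [hUlow1] with x hx hxI
      linarith [hx ⟨by linarith [hxI.1], by linarith [hxI.2]⟩])
  have hdisj : Disjoint (Ioo (δ/4) (3*δ/4)) (Ioo (1 - 3*δ/4) (1 - δ/4)) :=
    Ioo_disjoint_Ioo.2 (min_le_of_left_le (le_max_of_le_right (by linarith)))
  rw [setIntegral_union hdisj measurableSet_Ioo
    (hU.mono_set (Ioo_subset_Ioo (by linarith) (by linarith)))
    (hU.mono_set (Ioo_subset_Ioo (by linarith) (by linarith)))]
  linarith

/-- choice of the adverse initial datum: Let `C* > 0`, `δ ∈ (0,1/2)`,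
and let `U ∈ L²(0,1)` with `‖U‖_{L²(0,1)} ≤ C*`, `U(x) ≥ δx` a.e. on `(0,δ)` and
`U(x) ≥ δ(1−x)` a.e. on `(1−δ,1)`. Let `E = (δ/4, 3δ/4) ∪ (1−3δ/4, 1−δ/4)` and let
`h₀` be measurable with `h₀ = 4C*/δ³` on `E` and `0 ≤ h₀ ≤ 1` on `[0,1] \ E`. Then
`∫₀¹ U h₀ ≥ C* > 0`. -/
theorem adverse_initial_datum_pairing
    (Cstar δ : ℝ) (hC : 0 < Cstar) (hδ : δ ∈ Ioo (0:ℝ) (1/2))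
    (U h₀ : ℝ → ℝ)
    (hUmeas : AEStronglyMeasurable U (volume.restrict (Ioo (0:ℝ) 1)))
    (hUsq : IntegrableOn (fun x => U x ^ 2) (Ioo (0:ℝ) 1))
    (hUnorm : ∫ x in Ioo (0:ℝ) 1, U x ^ 2 ≤ Cstar ^ 2)
    (hUlow0 : ∀ᵐ x ∂volume, x ∈ Ioo (0:ℝ) δ → δ * x ≤ U x)
    (hUlow1 : ∀ᵐ x ∂volume, x ∈ Ioo (1 - δ) 1 → δ * (1 - x) ≤ U x)
    (h₀meas : Measurable h₀)
    (hE : ∀ x ∈ Ioo (δ/4) (3*δ/4) ∪ Ioo (1 - 3*δ/4) (1 - δ/4),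
        h₀ x = 4 * Cstar / δ ^ 3)
    (hoff : ∀ x ∈ Icc (0:ℝ) 1 \ (Ioo (δ/4) (3*δ/4) ∪ Ioo (1 - 3*δ/4) (1 - δ/4)),
        0 ≤ h₀ x ∧ h₀ x ≤ 1) :
    Cstar ≤ ∫ x in Ioo (0:ℝ) 1, U x * h₀ x := by
  have hU : IntegrableOn U (Ioo 0 1) :=
    ((memLp_two_iff_integrable_sq hUmeas).2 hUsq).integrable one_le_two
  have hL1 : ∫ x in Ioo 0 1, |U x| ≤ Cstar :=
    integral_abs_le_of_integral_sq_le hC (by simp) hU hUsq hUnorm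
  have hEU := cube_div_two_le_setIntegral_boundary_layers hδ hU hUlow0 hUlow1
  obtain ⟨hδ0, hδ2⟩ := hδ
  have hEsub : Ioo (δ/4) (3*δ/4) ∪ Ioo (1 - 3*δ/4) (1 - δ/4) ⊆ Ioo 0 1 :=
    union_subset (Ioo_subset_Ioo (by linarith) (by linarith))
      (Ioo_subset_Ioo (by linarith) (by linarith))
  calc Cstar = 4 * Cstar / δ ^ 3 * (δ ^ 3 / 2) - Cstar := by field_simp; ring
    _ ≤ 4 * Cstar / δ ^ 3 * (∫ x in Ioo (δ/4) (3*δ/4) ∪ Ioo (1 - 3*δ/4) (1 - δ/4), U x)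
        - ∫ x in Ioo 0 1, |U x| := by gcongr
    _ ≤ ∫ x in Ioo (0:ℝ) 1, U x * h₀ x :=
        sub_integral_abs_le_setIntegral_mul measurableSet_Ioo
          (measurableSet_Ioo.union measurableSet_Ioo) hEsub hU h₀meas.aestronglyMeasurable hE
          fun x hx => hoff x ⟨Ioo_subset_Icc_self hx.1, hx.2⟩
end
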